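/- arXiv:2511.15806 — 2 statements merged into one kernel-verified Lean document; each statement's English description precedes it below -/
import Mathlib

section
/- For every integer n ≥ 1, in the group algebra of the symmetric group S_n, the product (e + X_n)(e + X_{n-1})···(e + X_1) equals the sum of all permutations in S_n, where X_1 = 0 and X_i = (1,i) + (2,i) + ··· + (i-1,i) are the Jucys–Murphy elements and e is the identity. -/
/-- The `i`-th Jucys–Murphy element `X_{i+1} = Σ_{j<i} (j,i)` (0-indexed: the element
indexed by `i : Fin n` is the sum of transpositions `(j, i)` over `j < i`;
for `i = 0` this is `X_1 = 0`). -/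
noncomputable def JM (n : ℕ) (i : Fin n) : MonoidAlgebra ℂ (Equiv.Perm (Fin n)) :=
  ∑ j ∈ Finset.univ.filter (fun j : Fin n => j < i),
    MonoidAlgebra.single (Equiv.swap j i) (1 : ℂ)

/-!
Let `S_m ≤ S_n` be the permutations fixing every point `≥ m`. Every `σ ∈ S_{m+1}` factors
uniquely as `(j m) τ` with `j ≤ m` and `τ ∈ S_m`: take `j = σ m`, reading `(m m)` as `e`.
With that convention `e + X_{m+1} = Σ_{j ≤ m} (j m)` (0-indexed), so left multiplication by it
takes `Σ S_m` to `Σ S_{m+1}`; the product telescopes from `Σ S_0 = e` to `Σ S_n`.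
-/

open Finset MonoidAlgebra Equiv

namespace JucysMurphy

def permsFixingFrom (n m : ℕ) : Finset (Perm (Fin n)) :=
  {σ | ∀ k : Fin n, m ≤ k → σ k = k}

@[simp]
lemma mem_permsFixingFrom {n m : ℕ} {σ : Perm (Fin n)} :
    σ ∈ permsFixingFrom n m ↔ ∀ k : Fin n, m ≤ k → σ k = k := by
  simp [permsFixingFrom]

lemma permsFixingFrom_zero (n : ℕ) : permsFixingFrom n 0 = {1} := by
  ext σ
  simp [Perm.ext_iff]

lemma permsFixingFrom_self (n : ℕ) : permsFixingFrom n n = univ := by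
  ext σ
  simp [fun k : Fin n => k.isLt.not_ge]

variable {n : ℕ} {i : Fin n}

lemma apply_le_of_mem_permsFixingFrom_succ {σ : Perm (Fin n)}
    (hσ : σ ∈ permsFixingFrom n (i + 1)) : σ i ≤ i := by
  by_contra! h
  have := mem_permsFixingFrom.1 hσ (σ i) h
  exact h.ne' (σ.injective this)

lemma swap_mul_mem_permsFixingFrom_succ {j : Fin n} (hj : j ≤ i) {σ : Perm (Fin n)}
    (hσ : σ ∈ permsFixingFrom n i) : swap j i * σ ∈ permsFixingFrom n (i + 1) := by
  simp only [mem_permsFixingFrom, Perm.mul_apply] at hσ ⊢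
  intro k hk
  have hik : i < k := hk
  rw [hσ k hik.le, swap_apply_of_ne_of_ne (hj.trans_lt hik).ne' hik.ne']

lemma swap_apply_mul_mem_permsFixingFrom {σ : Perm (Fin n)}
    (hσ : σ ∈ permsFixingFrom n (i + 1)) : swap (σ i) i * σ ∈ permsFixingFrom n i := by
  have hσi := apply_le_of_mem_permsFixingFrom_succ hσ
  rw [mem_permsFixingFrom] at hσ ⊢
  intro k hk
  rcases (show i ≤ k from hk).eq_or_lt with rfl | hik
  · exact swap_apply_left _ _
  · rw [Perm.mul_apply, hσ k hik, swap_apply_of_ne_of_ne (hσi.trans_lt hik).ne' hik.ne']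

lemma sum_swap_mul_sum_permsFixingFrom (k : Type*) [Semiring k] :
    (∑ j ∈ Iic i, single (swap j i) (1 : k)) * ∑ σ ∈ permsFixingFrom n i, single σ 1
      = ∑ σ ∈ permsFixingFrom n (i + 1), single σ 1 := by
  simp only [sum_mul_sum, single_mul_single, mul_one, ← sum_product']
  refine sum_nbij' (fun p => swap p.1 i * p.2) (fun σ => (σ i, swap (σ i) i * σ)) ?_ ?_ ?_ ?_
    (fun _ _ => rfl)
  · rintro ⟨j, τ⟩ h
    rw [mem_product, mem_Iic] at h
    exact swap_mul_mem_permsFixingFrom_succ h.1 h.2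
  · intro σ hσ
    exact mem_product.2 ⟨mem_Iic.2 (apply_le_of_mem_permsFixingFrom_succ hσ),
      swap_apply_mul_mem_permsFixingFrom hσ⟩
  · rintro ⟨j, τ⟩ h
    rw [mem_product] at h
    have hτ : τ i = i := mem_permsFixingFrom.1 h.2 i le_rfl
    simp [hτ, ← mul_assoc]
  · intro σ _
    simp [← mul_assoc]

lemma one_add_JM_eq_sum_Iic :
    1 + JM n i = ∑ j ∈ Iic i, single (swap j i) (1 : ℂ) := by
  rw [JM, filter_gt_eq_Iio, ← Iio_insert, sum_insert (by simp), swap_self, ← Perm.one_def,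
    MonoidAlgebra.one_def]

lemma one_add_JM_mul_sum_permsFixingFrom :
    (1 + JM n i) * ∑ σ ∈ permsFixingFrom n i, single σ (1 : ℂ)
      = ∑ σ ∈ permsFixingFrom n (i + 1), single σ 1 := by
  rw [one_add_JM_eq_sum_Iic, sum_swap_mul_sum_permsFixingFrom]

lemma prod_take_finRange_one_add_JM {m : ℕ} (hm : m ≤ n) :
    (((List.finRange n).take m).reverse.map (fun i => 1 + JM n i)).prod
      = ∑ σ ∈ permsFixingFrom n m, single σ (1 : ℂ) := by
  induction m with
  | zero => simp [permsFixingFrom_zero, MonoidAlgebra.one_def]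
  | succ m ih =>
    have hmn : m < n := hm
    have hget : (List.finRange n)[m]? = some ⟨m, hmn⟩ := by simp [hmn]
    rw [List.take_add_one, hget, Option.toList_some, List.reverse_append, List.map_append,
      List.prod_append, List.reverse_singleton, List.map_singleton, List.prod_singleton,
      ih hmn.le]
    exact one_add_JM_mul_sum_permsFixingFrom

end JucysMurphy

theorem jucys_murphy_product_general (n : ℕ) :
    ((List.finRange n).reverse.map
        (fun i => (1 : MonoidAlgebra ℂ (Equiv.Perm (Fin n))) + JM n i)).prod
      = ∑ π : Equiv.Perm (Fin n), MonoidAlgebra.single π (1 : ℂ) := by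
  have h := JucysMurphy.prod_take_finRange_one_add_JM (le_refl n)
  rwa [List.take_of_length_le (by simp), JucysMurphy.permsFixingFrom_self] at h

/-- In the group algebra `ℂ[S_n]`, `(e + X_n)(e + X_{n-1}) ⋯ (e + X_1)` equals the
sum of all permutations of `S_n`. -/
theorem jucys_murphy_product (n : ℕ) (hn : 1 ≤ n) :
    ((List.finRange n).reverse.map
        (fun i => (1 : MonoidAlgebra ℂ (Equiv.Perm (Fin n))) + JM n i)).prod
      = ∑ π : Equiv.Perm (Fin n), MonoidAlgebra.single π (1 : ℂ) :=
  jucys_murphy_product_general n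
end

section
/- For integers n ≥ 2 and 1 ≤ m ≤ n, the symmetric subspace projector satisfies the recurrence Π_sym^{n,d} = ((e + X_n)/n) ··· ((e + X_{m+1})/(m+1)) · (Π_sym^{m,d} ⊗ I_d^{⊗(n-m)}), where X_i denotes the operator Σ_{j<i} P((j,i)) acting on (ℂ^d)^{⊗n}. -/
/-!
Let `F k ⊆ S_n` be the group of permutations fixing every register from `k` on, so that
`Π_sym^{k,d} ⊗ I = (k!)⁻¹ Σ_{π ∈ F k} P(π)`. Every `σ ∈ F (k + 1)` factors uniquely as
`(j k) · π` with `j ≤ k` and `π ∈ F k` (take `j = σ k`), and `P` is multiplicative, so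
`Σ_{F (k+1)} P = (e + X_{k+1}) · Σ_{F k} P`. Dividing by `(k + 1)!` gives one factor of the
recurrence; iterating from `k = m` up to `k = n`, where `F n = S_n`, gives the theorem.
-/

/-- The permutation operator `P(π)` on `(ℂ^d)^{⊗n}`. -/
noncomputable def permMat (d n : ℕ) (π : Equiv.Perm (Fin n)) :
    Matrix (Fin n → Fin d) (Fin n → Fin d) ℂ :=
  Matrix.of fun f g => if ∀ k, f k = g (π⁻¹ k) then 1 else 0

/-- The projector onto the symmetric subspace of `(ℂ^d)^{⊗n}`:
the average of all permutation operators. -/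
noncomputable def symProj (d n : ℕ) : Matrix (Fin n → Fin d) (Fin n → Fin d) ℂ :=
  ((n.factorial : ℂ))⁻¹ • ∑ π : Equiv.Perm (Fin n), permMat d n π

/-- `Π_sym^{m,d} ⊗ I^{⊗(n-m)}`, represented on `(ℂ^d)^{⊗n}`: the average of the
permutation operators over permutations fixing the last `n - m` registers. -/
noncomputable def symProjFirst (d n m : ℕ) : Matrix (Fin n → Fin d) (Fin n → Fin d) ℂ :=
  ((m.factorial : ℂ))⁻¹ •
    ∑ π ∈ Finset.univ.filter (fun π : Equiv.Perm (Fin n) => ∀ k : Fin n, m ≤ (k : ℕ) → π k = k),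
      permMat d n π

/-- The `i`-th Jucys–Murphy operator `X_{i+1} = Σ_{j<i} P((j,i))` on `(ℂ^d)^{⊗n}`
(0-indexed). -/
noncomputable def jmOp (d n : ℕ) (i : Fin n) : Matrix (Fin n → Fin d) (Fin n → Fin d) ℂ :=
  ∑ j ∈ Finset.univ.filter (fun j : Fin n => j < i), permMat d n (Equiv.swap j i)

open Finset Equiv

def fixingFrom (n k : ℕ) : Finset (Perm (Fin n)) :=
  univ.filter fun π => ∀ x : Fin n, k ≤ (x : ℕ) → π x = x

@[simp]
lemma mem_fixingFrom {n k : ℕ} {π : Perm (Fin n)} :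
    π ∈ fixingFrom n k ↔ ∀ x : Fin n, k ≤ (x : ℕ) → π x = x := by
  simp [fixingFrom]

lemma fixingFrom_self (n : ℕ) : fixingFrom n n = univ :=
  eq_univ_of_forall fun _ => mem_fixingFrom.2 fun x hx => absurd x.isLt (by omega)

section Cosets

variable {n : ℕ} {i : Fin n}

lemma apply_le_of_mem_fixingFrom_succ {σ : Perm (Fin n)} (hσ : σ ∈ fixingFrom n (i + 1)) :
    σ i ≤ i := by
  by_contra! hlt
  have hfix : σ (σ i) = σ i := mem_fixingFrom.1 hσ _ (Fin.lt_def.1 hlt)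
  exact hlt.ne' (σ.injective hfix)

lemma swap_mul_mem_fixingFrom_succ {j : Fin n} {π : Perm (Fin n)} (hj : j ≤ i)
    (hπ : π ∈ fixingFrom n i) : swap j i * π ∈ fixingFrom n (i + 1) := by
  refine mem_fixingFrom.2 fun x hx => ?_
  have hxi : i < x := Fin.lt_def.2 (by omega)
  rw [Perm.mul_apply, mem_fixingFrom.1 hπ x (by omega)]
  exact swap_apply_of_ne_of_ne (hj.trans_lt hxi).ne' hxi.ne'

lemma swap_apply_mul_mem_fixingFrom {σ : Perm (Fin n)} (hσ : σ ∈ fixingFrom n (i + 1)) :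
    swap (σ i) i * σ ∈ fixingFrom n i := by
  refine mem_fixingFrom.2 fun x hx => ?_
  obtain rfl | hxi := eq_or_lt_of_le (Fin.le_def.2 hx)
  · simp
  rw [Perm.mul_apply, mem_fixingFrom.1 hσ x (Fin.lt_def.1 hxi)]
  exact swap_apply_of_ne_of_ne ((apply_le_of_mem_fixingFrom_succ hσ).trans_lt hxi).ne' hxi.ne'

lemma sum_fixingFrom_succ {M : Type*} [AddCommMonoid M] (f : Perm (Fin n) → M) :
    ∑ σ ∈ fixingFrom n (i + 1), f σ
      = ∑ j ∈ Iic i, ∑ π ∈ fixingFrom n i, f (swap j i * π) := by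
  rw [← sum_product']
  refine sum_nbij' (fun σ => (σ i, swap (σ i) i * σ)) (fun p => swap p.1 i * p.2)
    (fun σ hσ => mem_product.2
      ⟨mem_Iic.2 (apply_le_of_mem_fixingFrom_succ hσ), swap_apply_mul_mem_fixingFrom hσ⟩)
    (fun p hp => swap_mul_mem_fixingFrom_succ (mem_Iic.1 (mem_product.1 hp).1)
      (mem_product.1 hp).2)
    (fun σ _ => by simp [← mul_assoc]) (fun p hp => ?_) (fun σ _ => by simp [← mul_assoc])
  have hp2 : p.2 i = i := mem_fixingFrom.1 (mem_product.1 hp).2 i le_rfl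
  simp [hp2, ← mul_assoc]

end Cosets

lemma permMat_one (d n : ℕ) : permMat d n 1 = 1 := by
  ext f g
  simp [permMat, Matrix.one_apply, funext_iff]

lemma permMat_mul (d n : ℕ) (σ τ : Perm (Fin n)) :
    permMat d n (σ * τ) = permMat d n σ * permMat d n τ := by
  ext f g
  simp only [permMat, Matrix.mul_apply, Matrix.of_apply]
  rw [sum_eq_single (f ∘ σ)]
  · have hf : ∀ k, f k = (f ∘ σ) (σ⁻¹ k) := by simp
    rw [if_pos hf, one_mul]
    congr 1
    exact propext ⟨fun h k => by simpa using h (σ k), fun h k => by simpa using h (σ⁻¹ k)⟩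
  · intro h _ hne
    rw [if_neg, zero_mul]
    exact fun hc => hne (funext fun x => by simpa using (hc (σ x)).symm)
  · simp

lemma one_add_jmOp (d n : ℕ) (i : Fin n) :
    1 + jmOp d n i = ∑ j ∈ Iic i, permMat d n (swap j i) := by
  rw [← Iio_insert, sum_insert notMem_Iio_self, swap_self, ← Perm.one_def, permMat_one, jmOp,
    filter_gt_eq_Iio]

/-- With 0-indexed registers, `jmFactor d n i` is `(e + X_{i+1}) / (i + 1)`. -/
noncomputable def jmFactor (d n : ℕ) (i : Fin n) : Matrix (Fin n → Fin d) (Fin n → Fin d) ℂ :=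
  ((i : ℕ) + 1 : ℂ)⁻¹ • (1 + jmOp d n i)

lemma symProjFirst_eq_sum_fixingFrom (d n m : ℕ) :
    symProjFirst d n m = ((m.factorial : ℂ))⁻¹ • ∑ π ∈ fixingFrom n m, permMat d n π :=
  rfl

lemma symProjFirst_self (d n : ℕ) : symProjFirst d n n = symProj d n := by
  rw [symProjFirst_eq_sum_fixingFrom, fixingFrom_self, symProj]

lemma symProjFirst_succ (d n : ℕ) (i : Fin n) :
    symProjFirst d n (i + 1) = jmFactor d n i * symProjFirst d n i := by
  have hsum : ∑ σ ∈ fixingFrom n (i + 1), permMat d n σ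
      = (1 + jmOp d n i) * ∑ π ∈ fixingFrom n i, permMat d n π := by
    rw [sum_fixingFrom_succ, one_add_jmOp, sum_mul]
    simp only [mul_sum, permMat_mul]
  rw [symProjFirst_eq_sum_fixingFrom, symProjFirst_eq_sum_fixingFrom, hsum, jmFactor,
    smul_mul_assoc, mul_smul_comm, smul_smul, Nat.factorial_succ, Nat.cast_mul, mul_inv,
    Nat.cast_succ]

lemma symProj_eq_prod_mul_symProjFirst (d : ℕ) {n k : ℕ} (hk : k ≤ n) :
    symProj d n = (((List.finRange n).drop k).reverse.map (jmFactor d n)).prod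
      * symProjFirst d n k := by
  induction hk using Nat.decreasingInduction with
  | self =>
    rw [List.drop_eq_nil_of_le (by simp), List.reverse_nil, List.map_nil, List.prod_nil,
      one_mul, symProjFirst_self]
  | of_succ k hk ih =>
    have hdrop : (List.finRange n).drop k = ⟨k, hk⟩ :: (List.finRange n).drop (k + 1) := by
      rw [List.drop_eq_getElem_cons (by simpa using hk), List.getElem_finRange]
      rfl
    rw [ih, hdrop, List.reverse_cons, List.map_append, List.prod_append, List.map_singleton,
      List.prod_singleton, mul_assoc, ← symProjFirst_succ]

theorem symProj_recurrence_general (n d m : ℕ) (hmn : m ≤ n) :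
    symProj d n
      = (((List.finRange n).drop m).reverse.map
            (fun (i : Fin n) => (((i : ℕ) + 1 : ℂ))⁻¹ • ((1 : Matrix (Fin n → Fin d) (Fin n → Fin d) ℂ)
              + jmOp d n i))).prod
        * symProjFirst d n m :=
  symProj_eq_prod_mul_symProjFirst d hmn

/-- Recurrence for the symmetric subspace projector:
`Π_sym^{n,d} = ((e + X_n)/n) ⋯ ((e + X_{m+1})/(m+1)) · (Π_sym^{m,d} ⊗ I^{⊗(n-m)})`. -/
theorem symProj_recurrence (n d m : ℕ) (hn : 2 ≤ n) (hm : 1 ≤ m) (hmn : m ≤ n) :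
    symProj d n
      = (((List.finRange n).drop m).reverse.map
            (fun (i : Fin n) => (((i : ℕ) + 1 : ℂ))⁻¹ • ((1 : Matrix (Fin n → Fin d) (Fin n → Fin d) ℂ)
              + jmOp d n i))).prod
        * symProjFirst d n m :=
  symProj_recurrence_general n d m hmn
end
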